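/- A point x ∈ ℝ^d lies on the sphere through d+1 affinely independent points p₀, …, p_d if and only if the (d+2)×(d+2) determinant whose rows are (‖y‖², y₁, …, y_d, 1) for y ∈ {x, p₀, …, p_d} vanishes. -/

import Mathlib

/-!
Lift `y ∈ ℝ^d` to `(‖y‖², y, 1) ∈ ℝ^(d+2)`. On lifted points, `dist y c ^ 2 - r ^ 2` is the linear
functional with the nonzero coefficient vector `(1, -2c, ‖c‖² - r²)`. If `x` lies on the sphere,
that vector is in the kernel of `M`, so `det M = 0`. Conversely, affine independence of the `p i`
makes their lifts linearly independent, so `det M = 0` puts the lift of `x` in their span, where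
the functional vanishes.
-/
open Finset Matrix Submodule Set

noncomputable def liftRow (d : ℕ) (y : EuclideanSpace ℝ (Fin d)) : Fin (d + 2) → ℝ :=
  Fin.cons (‖y‖ ^ 2) (Fin.snoc (fun k => y k) 1)

noncomputable def sphereCoeffs {d : ℕ} (c : EuclideanSpace ℝ (Fin d)) (r : ℝ) : Fin (d + 2) → ℝ :=
  Fin.cons 1 (Fin.snoc (fun k => -2 * c k) (‖c‖ ^ 2 - r ^ 2))

theorem liftRow_apply (d : ℕ) (y : EuclideanSpace ℝ (Fin d)) (j : Fin (d + 2)) :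
    liftRow d y j = if h0 : (j : ℕ) = 0 then ‖y‖ ^ 2
      else if h1 : (j : ℕ) < d + 1 then
        y ⟨(j : ℕ) - 1, Nat.sub_lt_right_of_lt_add (Nat.one_le_iff_ne_zero.2 h0) h1⟩
      else 1 := by
  induction j using Fin.cases with
  | zero => simp [liftRow]
  | succ j =>
    induction j using Fin.lastCases with
    | last => simp [liftRow]
    | cast k => simp [liftRow]

theorem liftRow_dotProduct_sphereCoeffs {d : ℕ} (y c : EuclideanSpace ℝ (Fin d)) (r : ℝ) :
    liftRow d y ⬝ᵥ sphereCoeffs c r = dist y c ^ 2 - r ^ 2 := by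
  rw [dist_eq_norm, norm_sub_sq_real, dotProduct, Fin.sum_univ_succ, Fin.sum_univ_castSucc]
  simp [liftRow, sphereCoeffs, PiLp.inner_apply, mul_sum, mul_left_comm, mul_comm]
  ring

theorem sphereCoeffs_ne_zero {d : ℕ} (c : EuclideanSpace ℝ (Fin d)) (r : ℝ) : sphereCoeffs c r ≠ 0 :=
  fun h => by simpa [sphereCoeffs] using congrFun h 0

theorem AffineIndependent.linearIndependent_liftRow {d : ℕ} {ι : Type*}
    {p : ι → EuclideanSpace ℝ (Fin d)} (hp : AffineIndependent ℝ p) :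
    LinearIndependent ℝ (liftRow d ∘ p) := by
  rw [linearIndependent_iff']
  intro s g hg i hi
  refine hp.eq_zero_of_sum_eq_zero ?_ ?_ i hi
  · simpa [liftRow] using congrFun hg (Fin.last _)
  · ext k; simpa [liftRow] using congrFun hg k.castSucc.succ

theorem mem_span_range_of_det_of_cons_eq_zero {K : Type*} [Field K] {n : ℕ}
    {v : Fin (n + 1) → K} {w : Fin n → Fin (n + 1) → K} (hw : LinearIndependent K w)
    (h : (of (Fin.cons v w)).det = 0) : v ∈ span K (range w) := by
  by_contra hv
  have hunit : IsUnit (of (Fin.cons v w)) :=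
    linearIndependent_rows_iff_isUnit.mp (linearIndependent_finCons.mpr ⟨hw, hv⟩)
  exact ((isUnit_iff_isUnit_det _).mp hunit).ne_zero h

theorem dist_eq_of_liftRow_mem_span {d : ℕ} {ι : Type*} [Nonempty ι]
    {p : ι → EuclideanSpace ℝ (Fin d)} {x c : EuclideanSpace ℝ (Fin d)} {r : ℝ}
    (hsphere : ∀ i, dist (p i) c = r) (hx : liftRow d x ∈ span ℝ (range (liftRow d ∘ p))) :
    dist x c = r := by
  obtain ⟨i⟩ := ‹Nonempty ι›
  have hker : span ℝ (range (liftRow d ∘ p)) ≤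
      LinearMap.ker (dotProductEquiv ℝ _ (sphereCoeffs c r)) := by
    rw [span_le]
    rintro _ ⟨i, rfl⟩
    simp [dotProduct_comm, liftRow_dotProduct_sphereCoeffs, hsphere]
  have hx' := hker hx
  simp [dotProduct_comm, liftRow_dotProduct_sphereCoeffs, sub_eq_zero] at hx'
  have hr : 0 ≤ r := hsphere i ▸ dist_nonneg
  exact (pow_left_inj₀ dist_nonneg hr two_ne_zero).mp hx'

/-- A point `x ∈ ℝ^d` lies on the sphere through `d+1` affinely independent points
`p 0, …, p d` if and only if the `(d+2)×(d+2)` determinant whose rows are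
`(‖y‖², y¹, …, y^d, 1)` for `y ∈ {x, p 0, …, p d}` vanishes. -/
theorem mem_sphere_iff_det_eq_zero
    (d : ℕ) (p : Fin (d + 1) → EuclideanSpace ℝ (Fin d))
    (hp : AffineIndependent ℝ p)
    (x : EuclideanSpace ℝ (Fin d))
    (c : EuclideanSpace ℝ (Fin d)) (r : ℝ)
    (hsphere : ∀ i, dist (p i) c = r)
    (M : Matrix (Fin (d + 2)) (Fin (d + 2)) ℝ)
    (hM : M = Matrix.of fun (i j : Fin (d + 2)) =>
      (fun y : EuclideanSpace ℝ (Fin d) =>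
        if h0 : (j : ℕ) = 0 then ‖y‖ ^ 2
        else if h1 : (j : ℕ) < d + 1 then y ⟨(j : ℕ) - 1, by omega⟩
        else 1)
      ((Fin.cons x p : Fin (d + 2) → EuclideanSpace ℝ (Fin d)) i)) :
    dist x c = r ↔ M.det = 0 := by
  have hrows : M = of (Fin.cons (liftRow d x) (liftRow d ∘ p)) := by
    simp_rw [hM, ← liftRow_apply, ← Fin.comp_cons]
    rfl
  constructor
  · intro hx
    refine exists_mulVec_eq_zero_iff.mp ⟨sphereCoeffs c r, sphereCoeffs_ne_zero c r, ?_⟩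
    ext i
    induction i using Fin.cases <;>
      simp [hrows, mulVec, liftRow_dotProduct_sphereCoeffs, hx, hsphere]
  · intro hdet
    rw [hrows] at hdet
    exact dist_eq_of_liftRow_mem_span hsphere
      (mem_span_range_of_det_of_cons_eq_zero hp.linearIndependent_liftRow hdet)
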